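/- Let k be a field and let r ≥ 1 and N ≥ 0 be integers. Then the functor from commutative k-algebras to sets given by R ↦ { (A, B) : A, B are r×r matrices over R((t)) with AB = BA = Id and every entry of A and of B lies in t^{−N}·R[[t]] }, with functoriality induced by applying a ring homomorphism R → R' coefficientwise to Laurent series, is corepresentable by a commutative k-algebra. For N = 0 this functor is naturally isomorphic to R ↦ GL_r(R[[t]]), so in particular the functor R ↦ GL_r(R[[t]]) is corepresentable by a commutative k-algebra. -/

import Mathlib

/-- The functor (in `R`) of pairs `(A, B)` of `r × r` matrices over the Laurent series ring
`R((t))` with `A·B = B·A = 1` and all entries of `A` and `B` lying in `t^{-N}·R[[t]]`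
(equivalently, `t^N` times each entry lies in `R[[t]]`). -/
def glPairFunctor (r N : ℕ) (R : Type u) [CommRing R] : Type u :=
  { AB : Matrix (Fin r) (Fin r) (LaurentSeries R) × Matrix (Fin r) (Fin r) (LaurentSeries R) //
    AB.1 * AB.2 = 1 ∧ AB.2 * AB.1 = 1 ∧
    (∀ i j, HahnSeries.single (N : ℤ) (1 : R) * AB.1 i j ∈
      Set.range (HahnSeries.ofPowerSeries ℤ R)) ∧
    (∀ i j, HahnSeries.single (N : ℤ) (1 : R) * AB.2 i j ∈
      Set.range (HahnSeries.ofPowerSeries ℤ R)) }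

/-!
A pair `(A, B)` with poles of order at most `N` is the same as the pair `(t^N A, t^N B)` of
matrices over `R[[t]]` whose products in either order are `t^{2N}`. Writing out the coefficients
of the entries of such a pair, the functor becomes the zero locus of the coefficients of
`P Q - t^{2N}` and `Q P - t^{2N}` in the coefficient space, so it is corepresented by the
polynomial `k`-algebra on these coefficients modulo the ideal those coefficients generate. For
`N = 0` such a pair is a matrix over `R[[t]]` together with its inverse.
-/

open PowerSeries

theorem HahnSeries.map_ofPowerSeries {R S : Type*} [Semiring R] [Semiring S] (f : R →+* S)
    (p : R⟦X⟧) : (ofPowerSeries ℤ R p).map f = ofPowerSeries ℤ S (p.map f) := by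
  ext i
  rw [map_coeff, PowerSeries.coeff_coe, PowerSeries.coeff_coe]
  split_ifs <;> simp

theorem HahnSeries.single_mul_single_neg {R : Type*} [Semiring R] (a : ℤ) :
    single a (1 : R) * single (-a) 1 = 1 := by
  rw [single_mul_single, add_neg_cancel, one_mul, single_zero_one]

theorem Matrix.map_smul_one {n : Type*} [DecidableEq n] {R S : Type*} [NonAssocSemiring R]
    [NonAssocSemiring S]
    (f : R →+* S) (a : R) : (a • (1 : Matrix n n R)).map f = f a • 1 := by
  rw [smul_one_eq_diagonal, diagonal_map (map_zero f), smul_one_eq_diagonal]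

section AlgHomEquiv

variable {k A R : Type*} [CommRing k] [CommRing A] [Algebra k A] [CommSemiring R] [Algebra k R]

noncomputable def Ideal.Quotient.algHomEquiv (I : Ideal A) :
    (A ⧸ I →ₐ[k] R) ≃ {f : A →ₐ[k] R // I ≤ RingHom.ker f} where
  toFun g := ⟨g.comp (Ideal.Quotient.mkₐ k I), fun a ha => by
    rw [RingHom.mem_ker, AlgHom.comp_apply, Ideal.Quotient.mkₐ_eq_mk,
      Ideal.Quotient.eq_zero_iff_mem.2 ha, map_zero]⟩
  invFun f := Ideal.Quotient.liftₐ I f.1 fun _ ha => RingHom.mem_ker.1 (f.2 ha)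
  left_inv g := Ideal.Quotient.algHom_ext k (Ideal.Quotient.liftₐ_comp _ _ _)
  right_inv f := Subtype.ext (Ideal.Quotient.liftₐ_comp _ _ _)

noncomputable def MvPolynomial.algHomEquiv (σ : Type*) :
    (MvPolynomial σ k →ₐ[k] R) ≃ (σ → R) where
  toFun φ := φ ∘ X
  invFun := aeval
  left_inv φ := (aeval_unique φ).symm
  right_inv x := _root_.funext (aeval_X x)

noncomputable def MvPolynomial.quotientSpanAlgHomEquiv {σ : Type*} (s : Set (MvPolynomial σ k)) :
    (MvPolynomial σ k ⧸ Ideal.span s →ₐ[k] R) ≃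
      {x : σ → R // ∀ p ∈ s, aeval x p = 0} :=
  (Ideal.Quotient.algHomEquiv _).trans <| (algHomEquiv σ).subtypeEquiv fun φ => by
    rw [show aeval (algHomEquiv σ φ) = φ from (aeval_unique φ).symm, Ideal.span_le]
    simp [Set.subset_def]

theorem MvPolynomial.quotientSpanAlgHomEquiv_comp {σ R' : Type*} [CommSemiring R'] [Algebra k R']
    (s : Set (MvPolynomial σ k)) (f : R →ₐ[k] R')
    (g : MvPolynomial σ k ⧸ Ideal.span s →ₐ[k] R) :
    (quotientSpanAlgHomEquiv s (f.comp g)).1 = f ∘ (quotientSpanAlgHomEquiv s g).1 :=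
  rfl

end AlgHomEquiv

namespace PowerSeries

variable (n : Type*) {R S : Type*} [Semiring R] [Semiring S]

noncomputable def matrixCoeffEquiv (R : Type*) [Semiring R] :
    (n × n × ℕ → R) ≃ Matrix n n R⟦X⟧ where
  toFun x := Matrix.of fun i j => mk fun k => x (i, j, k)
  invFun M ijk := coeff ijk.2.2 (M ijk.1 ijk.2.1)
  left_inv x := by ext; simp
  right_inv M := by ext; simp

variable {n}

theorem matrixCoeffEquiv_comp (f : R →+* S) (x : n × n × ℕ → R) :
    matrixCoeffEquiv n S (f ∘ x) = (matrixCoeffEquiv n R x).map (map f) := by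
  ext; simp [matrixCoeffEquiv]

theorem map_matrix_eq_zero_iff (f : R →+* S) (M : Matrix n n R⟦X⟧) :
    M.map (map f) = 0 ↔ ∀ p ∈ Set.range ((matrixCoeffEquiv n R).symm M), f p = 0 := by
  rw [← (matrixCoeffEquiv n R).apply_symm_apply M, ← matrixCoeffEquiv_comp,
    Equiv.symm_apply_apply, ← (matrixCoeffEquiv n S).symm.injective.eq_iff,
    Equiv.symm_apply_apply, Set.forall_mem_range, funext_iff]
  rfl

end PowerSeries

def PowerSeriesMatrixPair (n : Type*) [Fintype n] [DecidableEq n] (m : ℕ) (R : Type*)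
    [CommSemiring R] :=
  {PQ : Matrix n n R⟦X⟧ × Matrix n n R⟦X⟧ //
    PQ.1 * PQ.2 = (X : R⟦X⟧) ^ m • 1 ∧ PQ.2 * PQ.1 = (X : R⟦X⟧) ^ m • 1}

namespace PowerSeriesMatrixPair

abbrev CoeffIndex (n : Type*) : Type _ := (n × n × ℕ) ⊕ (n × n × ℕ)

variable (k : Type*) [CommRing k] (n : Type*)

noncomputable def universal :
    Matrix n n (MvPolynomial (CoeffIndex n) k)⟦X⟧ ×
      Matrix n n (MvPolynomial (CoeffIndex n) k)⟦X⟧ :=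
  (matrixCoeffEquiv n _ (MvPolynomial.X ∘ Sum.inl),
    matrixCoeffEquiv n _ (MvPolynomial.X ∘ Sum.inr))

variable {k n} {R R' : Type*} [CommRing R] [Algebra k R] [CommRing R'] [Algebra k R']

theorem map_universal_fst (x : CoeffIndex n → R) :
    (universal k n).1.map (map (MvPolynomial.aeval x).toRingHom) =
      matrixCoeffEquiv n R (x ∘ Sum.inl) := by
  rw [universal, ← matrixCoeffEquiv_comp]
  congr 1
  ext; simp

theorem map_universal_snd (x : CoeffIndex n → R) :
    (universal k n).2.map (map (MvPolynomial.aeval x).toRingHom) =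
      matrixCoeffEquiv n R (x ∘ Sum.inr) := by
  rw [universal, ← matrixCoeffEquiv_comp]
  congr 1
  ext; simp

variable (k n) [Fintype n] [DecidableEq n] (m : ℕ)

noncomputable def relations : Set (MvPolynomial (CoeffIndex n) k) :=
  Set.range ((matrixCoeffEquiv n _).symm ((universal k n).1 * (universal k n).2 -
      (X : (MvPolynomial (CoeffIndex n) k)⟦X⟧) ^ m • 1)) ∪
    Set.range ((matrixCoeffEquiv n _).symm ((universal k n).2 * (universal k n).1 -
      (X : (MvPolynomial (CoeffIndex n) k)⟦X⟧) ^ m • 1))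

def CorepAlgebra : Type _ :=
  MvPolynomial (CoeffIndex n) k ⧸ Ideal.span (relations k n m)

noncomputable instance : CommRing (CorepAlgebra k n m) := Ideal.Quotient.commRing _

noncomputable instance : Algebra k (CorepAlgebra k n m) := Ideal.Quotient.algebra k

variable {k n m}

theorem aeval_relations_eq_zero_iff (x : CoeffIndex n → R) :
    (∀ p ∈ relations k n m, MvPolynomial.aeval x p = 0) ↔
      matrixCoeffEquiv n R (x ∘ Sum.inl) * matrixCoeffEquiv n R (x ∘ Sum.inr) =
          (X : R⟦X⟧) ^ m • 1 ∧
        matrixCoeffEquiv n R (x ∘ Sum.inr) * matrixCoeffEquiv n R (x ∘ Sum.inl) =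
          (X : R⟦X⟧) ^ m • 1 := by
  set φ := (MvPolynomial.aeval (R := k) x).toRingHom
  have hmap (U V : Matrix n n (MvPolynomial (CoeffIndex n) k)⟦X⟧) :
      (U * V - (X : (MvPolynomial (CoeffIndex n) k)⟦X⟧) ^ m • 1).map (map φ) =
        U.map (map φ) * V.map (map φ) - (X : R⟦X⟧) ^ m • 1 := by
    simp only [← RingHom.mapMatrix_apply, map_sub, map_mul]
    simp only [RingHom.mapMatrix_apply, Matrix.map_smul_one, map_pow, map_X]
  change (∀ p ∈ _, φ p = 0) ↔ _
  simp only [relations, Set.mem_union, or_imp, forall_and]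
  rw [← map_matrix_eq_zero_iff, ← map_matrix_eq_zero_iff, hmap, hmap, map_universal_fst,
    map_universal_snd, sub_eq_zero, sub_eq_zero]

noncomputable def corepEquiv : (CorepAlgebra k n m →ₐ[k] R) ≃ PowerSeriesMatrixPair n m R :=
  (MvPolynomial.quotientSpanAlgHomEquiv _).trans <|
    ((Equiv.sumArrowEquivProdArrow _ _ _).trans
      (Equiv.prodCongr (matrixCoeffEquiv n R) (matrixCoeffEquiv n R))).subtypeEquiv
      aeval_relations_eq_zero_iff

theorem corepEquiv_comp_fst (f : R →ₐ[k] R') (g : CorepAlgebra k n m →ₐ[k] R) :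
    (corepEquiv (f.comp g)).1.1 = (corepEquiv g).1.1.map (map f.toRingHom) :=
  matrixCoeffEquiv_comp f.toRingHom _

theorem corepEquiv_comp_snd (f : R →ₐ[k] R') (g : CorepAlgebra k n m →ₐ[k] R) :
    (corepEquiv (f.comp g)).1.2 = (corepEquiv g).1.2.map (map f.toRingHom) :=
  matrixCoeffEquiv_comp f.toRingHom _

noncomputable def unitsEquiv : PowerSeriesMatrixPair n 0 R ≃ (Matrix n n R⟦X⟧)ˣ where
  toFun PQ := ⟨PQ.1.1, PQ.1.2, by simpa using PQ.2.1, by simpa using PQ.2.2⟩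
  invFun M := ⟨(M.val, M.inv), by simp, by simp⟩
  left_inv _ := rfl
  right_inv _ := rfl

end PowerSeriesMatrixPair

section LaurentMatrix

open HahnSeries

variable {n : Type*} {R R' : Type*} [CommSemiring R] [CommSemiring R'] (N : ℕ)

noncomputable def toLaurentMatrix (P : Matrix n n R⟦X⟧) : Matrix n n (LaurentSeries R) :=
  single (-N : ℤ) (1 : R) • P.map (ofPowerSeries ℤ R)

theorem single_mul_toLaurentMatrix_apply (P : Matrix n n R⟦X⟧) (i j : n) :
    single (N : ℤ) (1 : R) * toLaurentMatrix N P i j = ofPowerSeries ℤ R (P i j) := by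
  rw [toLaurentMatrix, Matrix.smul_apply, Matrix.map_apply, smul_eq_mul, ← mul_assoc,
    single_mul_single_neg, one_mul]

theorem single_mul_toLaurentMatrix_mem_range (P : Matrix n n R⟦X⟧) (i j : n) :
    single (N : ℤ) (1 : R) * toLaurentMatrix N P i j ∈ Set.range (ofPowerSeries ℤ R) :=
  ⟨P i j, (single_mul_toLaurentMatrix_apply N P i j).symm⟩

theorem toLaurentMatrix_injective : Function.Injective (toLaurentMatrix (n := n) (R := R) N) :=
  fun P Q h => Matrix.ext fun i j => ofPowerSeries_injective <| by
    rw [← single_mul_toLaurentMatrix_apply, ← single_mul_toLaurentMatrix_apply, h]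

theorem exists_toLaurentMatrix_eq {A : Matrix n n (LaurentSeries R)}
    (hA : ∀ i j, single (N : ℤ) (1 : R) * A i j ∈ Set.range (ofPowerSeries ℤ R)) :
    ∃ P, toLaurentMatrix N P = A := by
  choose P hP using hA
  refine ⟨Matrix.of P, Matrix.ext fun i j => ?_⟩
  rw [toLaurentMatrix, Matrix.smul_apply, Matrix.map_apply, Matrix.of_apply, hP, smul_eq_mul,
    ← mul_assoc, mul_comm (single _ _), single_mul_single_neg, one_mul]

theorem toLaurentMatrix_map (f : R →+* R') (P : Matrix n n R⟦X⟧) :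
    toLaurentMatrix N (P.map (map f)) =
      (toLaurentMatrix N P).map (fun x => HahnSeries.map x f) := by
  refine Matrix.ext fun i j => ?_
  simp only [toLaurentMatrix, Matrix.map_apply, Matrix.smul_apply, smul_eq_mul,
    ← HahnSeries.map_ofPowerSeries]
  change _ = HahnSeries.map _ (f : R →ₙ+* R')
  rw [HahnSeries.map_mul]
  congr 1
  exact ((HahnSeries.map_single (f : ZeroHom R R')).trans (by simp)).symm

variable [Fintype n] [DecidableEq n]

theorem toLaurentMatrix_mul_toLaurentMatrix (P Q : Matrix n n R⟦X⟧) :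
    toLaurentMatrix N P * toLaurentMatrix N Q =
      single (-(2 * N : ℕ) : ℤ) (1 : R) • (P * Q).map (ofPowerSeries ℤ R) := by
  rw [toLaurentMatrix, toLaurentMatrix, smul_mul_smul_comm, single_mul_single, one_mul,
    Matrix.map_mul]
  push_cast; ring_nf

theorem toLaurentMatrix_mul_toLaurentMatrix_eq_one_iff (P Q : Matrix n n R⟦X⟧) :
    toLaurentMatrix N P * toLaurentMatrix N Q = 1 ↔ P * Q = (X : R⟦X⟧) ^ (2 * N) • 1 := by
  rw [← (Matrix.map_injective (ofPowerSeries_injective (Γ := ℤ) (R := R))).eq_iff,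
    Matrix.map_smul_one, ofPowerSeries_X_pow, toLaurentMatrix_mul_toLaurentMatrix]
  constructor
  · intro h
    rw [← h, smul_smul, single_mul_single_neg, one_smul]
  · intro h
    rw [h, smul_smul, mul_comm, single_mul_single_neg, one_smul]

end LaurentMatrix

namespace glPairFunctor

variable (k : Type*) [CommRing k] {r N : ℕ} {R R' : Type*} [CommRing R] [CommRing R']

noncomputable def ofPowerSeriesMatrixPair (PQ : PowerSeriesMatrixPair (Fin r) (2 * N) R) :
    glPairFunctor r N R :=
  ⟨(toLaurentMatrix N PQ.1.1, toLaurentMatrix N PQ.1.2),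
    (toLaurentMatrix_mul_toLaurentMatrix_eq_one_iff N _ _).2 PQ.2.1,
    (toLaurentMatrix_mul_toLaurentMatrix_eq_one_iff N _ _).2 PQ.2.2,
    single_mul_toLaurentMatrix_mem_range N _, single_mul_toLaurentMatrix_mem_range N _⟩

theorem ofPowerSeriesMatrixPair_bijective :
    Function.Bijective (ofPowerSeriesMatrixPair (r := r) (N := N) (R := R)) := by
  refine ⟨fun PQ PQ' h => ?_, fun AB => ?_⟩
  · have h' := congrArg Subtype.val h
    exact Subtype.ext (Prod.ext (toLaurentMatrix_injective N (congrArg Prod.fst h'))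
      (toLaurentMatrix_injective N (congrArg Prod.snd h')))
  · obtain ⟨⟨A, B⟩, hAB, hBA, hA, hB⟩ := AB
    obtain ⟨P, rfl⟩ := exists_toLaurentMatrix_eq N hA
    obtain ⟨Q, rfl⟩ := exists_toLaurentMatrix_eq N hB
    exact ⟨⟨(P, Q), (toLaurentMatrix_mul_toLaurentMatrix_eq_one_iff N _ _).1 hAB,
      (toLaurentMatrix_mul_toLaurentMatrix_eq_one_iff N _ _).1 hBA⟩, rfl⟩

variable (r N R) in
noncomputable def powerSeriesMatrixPairEquiv :
    PowerSeriesMatrixPair (Fin r) (2 * N) R ≃ glPairFunctor r N R :=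
  Equiv.ofBijective _ ofPowerSeriesMatrixPair_bijective

variable [Algebra k R] [Algebra k R']

variable (r N R) in
noncomputable def corepEquiv :
    (PowerSeriesMatrixPair.CorepAlgebra k (Fin r) (2 * N) →ₐ[k] R) ≃ glPairFunctor r N R :=
  PowerSeriesMatrixPair.corepEquiv.trans (powerSeriesMatrixPairEquiv r N R)

theorem corepEquiv_comp (f : R →ₐ[k] R')
    (g : PowerSeriesMatrixPair.CorepAlgebra k (Fin r) (2 * N) →ₐ[k] R) :
    (corepEquiv k r N R' (f.comp g)).1.1 =
        (corepEquiv k r N R g).1.1.map (fun x => HahnSeries.map x f.toRingHom) ∧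
      (corepEquiv k r N R' (f.comp g)).1.2 =
        (corepEquiv k r N R g).1.2.map (fun x => HahnSeries.map x f.toRingHom) :=
  ⟨(congrArg (toLaurentMatrix N) (PowerSeriesMatrixPair.corepEquiv_comp_fst f g)).trans
      (toLaurentMatrix_map N _ _),
    (congrArg (toLaurentMatrix N) (PowerSeriesMatrixPair.corepEquiv_comp_snd f g)).trans
      (toLaurentMatrix_map N _ _)⟩

variable (r R) in
noncomputable def zeroEquivUnits :
    glPairFunctor r 0 R ≃ Matrix.GeneralLinearGroup (Fin r) R⟦X⟧ :=
  (powerSeriesMatrixPairEquiv r 0 R).symm.trans PowerSeriesMatrixPair.unitsEquiv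

theorem zeroEquivUnits_symm_map (f : R →+* R') (p : glPairFunctor r 0 R) :
    ((zeroEquivUnits r R').symm (Units.map (RingHom.mapMatrix (map f)).toMonoidHom
        (zeroEquivUnits r R p))).1.1 = p.1.1.map (fun x => HahnSeries.map x f) ∧
      ((zeroEquivUnits r R').symm (Units.map (RingHom.mapMatrix (map f)).toMonoidHom
        (zeroEquivUnits r R p))).1.2 = p.1.2.map (fun x => HahnSeries.map x f) := by
  obtain ⟨M, rfl⟩ := (zeroEquivUnits r R).symm.surjective p
  rw [Equiv.apply_symm_apply]
  exact ⟨toLaurentMatrix_map 0 f M.val, toLaurentMatrix_map 0 f M⁻¹.val⟩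

end glPairFunctor

theorem glPairFunctor_corepresentable (k : Type u) [Field k] (r N : ℕ) :
    (∃ (A : Type u) (_ : CommRing A) (_ : Algebra k A),
      ∃ e : (R : Type u) → [inst : CommRing R] → [inst' : Algebra k R] →
          ((A →ₐ[k] R) ≃ glPairFunctor r N R),
        ∀ (R R' : Type u) [CommRing R] [Algebra k R] [CommRing R'] [Algebra k R']
          (f : R →ₐ[k] R') (g : A →ₐ[k] R),
            ((e R' (f.comp g)).1.1 =
              (e R g).1.1.map (fun x => HahnSeries.map x f.toRingHom)) ∧
            ((e R' (f.comp g)).1.2 =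
              (e R g).1.2.map (fun x => HahnSeries.map x f.toRingHom))) ∧
    (∃ u : (R : Type u) → [inst : CommRing R] → [inst' : Algebra k R] →
          (glPairFunctor r 0 R ≃ Matrix.GeneralLinearGroup (Fin r) (PowerSeries R)),
        ∀ (R R' : Type u) [CommRing R] [Algebra k R] [CommRing R'] [Algebra k R']
          (f : R →ₐ[k] R') (p : glPairFunctor r 0 R),
            (((u R').symm (Units.map
                ((RingHom.mapMatrix (PowerSeries.map f.toRingHom)).toMonoidHom)
                (u R p))).1.1 =
              p.1.1.map (fun x => HahnSeries.map x f.toRingHom)) ∧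
            (((u R').symm (Units.map
                ((RingHom.mapMatrix (PowerSeries.map f.toRingHom)).toMonoidHom)
                (u R p))).1.2 =
              p.1.2.map (fun x => HahnSeries.map x f.toRingHom))) ∧
    (∃ (A : Type u) (_ : CommRing A) (_ : Algebra k A),
      ∃ e : (R : Type u) → [inst : CommRing R] → [inst' : Algebra k R] →
          ((A →ₐ[k] R) ≃ Matrix.GeneralLinearGroup (Fin r) (PowerSeries R)),
        ∀ (R R' : Type u) [CommRing R] [Algebra k R] [CommRing R'] [Algebra k R']
          (f : R →ₐ[k] R') (g : A →ₐ[k] R),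
            e R' (f.comp g) = Units.map
              ((RingHom.mapMatrix (PowerSeries.map f.toRingHom)).toMonoidHom)
              (e R g)) := by
  refine ⟨⟨_, _, _, fun R _ _ => glPairFunctor.corepEquiv k r N R,
      fun R R' _ _ _ _ f g => glPairFunctor.corepEquiv_comp k f g⟩,
    ⟨fun R _ _ => glPairFunctor.zeroEquivUnits r R,
      fun R R' _ _ _ _ f p => glPairFunctor.zeroEquivUnits_symm_map f.toRingHom p⟩,
    ⟨_, _, _, fun R _ _ => (glPairFunctor.corepEquiv k r 0 R).trans
      (glPairFunctor.zeroEquivUnits r R), fun R R' _ _ _ _ f g => ?_⟩⟩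
  obtain ⟨h₁, h₂⟩ := glPairFunctor.corepEquiv_comp k f g
  obtain ⟨h₃, h₄⟩ := glPairFunctor.zeroEquivUnits_symm_map f.toRingHom
    (glPairFunctor.corepEquiv k r 0 R g)
  rw [Equiv.trans_apply, Equiv.trans_apply, ← Equiv.eq_symm_apply]
  exact Subtype.ext (Prod.ext (h₁.trans h₃.symm) (h₂.trans h₄.symm))
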